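/- Let (a,b,c) be an ABC-solution, n ≥ 2 an even integer, and (A,B,C) = Θ_n(a,b,c). Then log rad(|A·B·C|) ≤ (n−1)·log c + log rad(|a·b·c|) + log(2n); equivalently, rad(|A·B·C|) ≤ 2n·c^{n−1}·rad(|a·b·c|). -/

import Mathlib

/-- An ABC-solution: distinct, pairwise coprime integers with a+b+c = 0, a < 0, b < 0. -/
def IsABCSolution (a b c : ℤ) : Prop :=
  a + b + c = 0 ∧ a < 0 ∧ b < 0 ∧
  a ≠ b ∧ b ≠ c ∧ a ≠ c ∧
  IsCoprime a b ∧ IsCoprime b c ∧ IsCoprime a c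

/-- The radical of a natural number: the product of its distinct prime factors. -/
def rad (n : ℕ) : ℕ := ∏ p ∈ n.primeFactors, p

/-- The quality function f((a,b,c),ε) = log c − (1+ε)·log rad(|a·b·c|). -/
noncomputable def fABC (a b c : ℤ) (ε : ℝ) : ℝ :=
  Real.log (c : ℝ) - (1 + ε) * Real.log (rad (a * b * c).natAbs : ℝ)

/-- The operation Θ_n on ABC-solutions, with m = n if c is even and m = 0 otherwise.
The divisions are exact integer divisions. -/
def theta (n : ℕ) (a b c : ℤ) : ℤ × ℤ × ℤ :=
  let m : ℕ := if 2 ∣ c then n else 0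
  (-((a - b) ^ n / 2 ^ m), -((c ^ n - (a - b) ^ n) / 2 ^ m), c ^ n / 2 ^ m)

/-! Clearing the powers of two in `Θ_n(a,b,c)` leaves `d^n (c^n - d^n) c^n` with `d = a - b`. For
`n = 2k` the middle factor is `(c² - d²) S = 4ab S` with `S = ∑_{i<k} c^{2i} d^{2(k-1-i)}`, and
`0 < S ≤ k c^{n-2}` because `|d| < c`. Hence
`rad(ABC) ≤ rad d · rad(4ab) · S · rad c ≤ c · 2 rad(ab) · k c^{n-2} · rad c = n c^{n-1} rad(abc)`,
the last step by coprimality of `ab` and `c`. -/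

open UniqueFactorizationMonoid

lemma geom_sum₂_le_mul_pow {R : Type*} [CommSemiring R] [PartialOrder R] [IsOrderedRing R]
    {x y : R} (hy : 0 ≤ y) (hyx : y ≤ x) (n : ℕ) :
    ∑ i ∈ Finset.range n, x ^ i * y ^ (n - 1 - i) ≤ n * x ^ (n - 1) := by
  rw [← geom_sum₂_self]
  refine Finset.sum_le_sum fun i _ ↦ ?_
  exact mul_le_mul_of_nonneg_left (pow_le_pow_left₀ hy hyx _) (pow_nonneg (hy.trans hyx) _)

lemma rad_eq_radical (n : ℕ) : rad n = radical n :=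
  Nat.radical_eq_prod_primeFactors.symm

lemma rad_pos (n : ℕ) : 0 < rad n :=
  rad_eq_radical n ▸ Nat.radical_pos n

lemma natCast_rad_natAbs (z : ℤ) : (rad z.natAbs : ℤ) = radical z := by
  rw [rad_eq_radical, Int.radical_natAbs_eq_radical]

namespace Int

lemma radical_le_abs {z : ℤ} (hz : z ≠ 0) : radical z ≤ |z| :=
  Int.le_of_dvd (abs_pos.2 hz) (radical_dvd_self.trans (self_dvd_abs z))

lemma radical_le_radical {x y : ℤ} (h : x ∣ y) (hy : y ≠ 0) : radical x ≤ radical y :=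
  Int.le_of_dvd (radical_pos y) (radical_dvd_radical h hy)

lemma radical_four : radical (4 : ℤ) = 2 := by
  rw [show (4 : ℤ) = 2 ^ 2 by norm_num, radical_pow _ two_ne_zero, radical_of_prime Int.prime_two]
  rfl

lemma radical_four_mul_le (z : ℤ) : radical (4 * z) ≤ 2 * radical z := by
  have h4 : radical (4 * z) ∣ radical 4 * radical z := radical_mul_dvd
  rw [radical_four] at h4
  exact Int.le_of_dvd (mul_pos two_pos (radical_pos z)) h4

lemma radical_pow_sub_pow_le {x y : ℤ} (hyx : |y| < x) {k : ℕ} (hk : k ≠ 0) :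
    radical (x ^ (2 * k) - y ^ (2 * k)) ≤ radical (x ^ 2 - y ^ 2) * (k * x ^ (2 * k - 2)) := by
  set S := ∑ i ∈ Finset.range k, (x ^ 2) ^ i * (y ^ 2) ^ (k - 1 - i)
  have hsq : y ^ 2 < x ^ 2 := sq_lt_sq' (abs_lt.1 hyx).1 (abs_lt.1 hyx).2
  have hfactor : x ^ (2 * k) - y ^ (2 * k) = (x ^ 2 - y ^ 2) * S := by
    rw [pow_mul, pow_mul, ← geom_sum₂_mul, mul_comm]
  have hS : 0 < S := by
    refine pos_of_mul_pos_right (a := x ^ 2 - y ^ 2) ?_ (sub_nonneg.2 hsq.le)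
    rw [← hfactor, pow_mul, pow_mul, sub_pos]
    exact pow_lt_pow_left₀ hsq (sq_nonneg y) hk
  have hSle : S ≤ k * x ^ (2 * k - 2) := by
    rw [show 2 * k - 2 = 2 * (k - 1) by omega, pow_mul]
    exact geom_sum₂_le_mul_pow (sq_nonneg y) hsq.le k
  calc radical (x ^ (2 * k) - y ^ (2 * k))
      ≤ radical (x ^ 2 - y ^ 2) * radical S := by
        rw [hfactor]
        exact Int.le_of_dvd (mul_pos (radical_pos _) (radical_pos _)) radical_mul_dvd
    _ ≤ radical (x ^ 2 - y ^ 2) * (k * x ^ (2 * k - 2)) := by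
        gcongr
        · exact (radical_pos _).le
        · exact (radical_le_abs hS.ne').trans ((abs_of_pos hS).trans_le hSle)

end Int

lemma radical_pow_mul_mul_pow_dvd {M : Type*} [CommMonoidWithZero M] [NormalizationMonoid M]
    [UniqueFactorizationMonoid M] (x y z : M) {n : ℕ} (hn : n ≠ 0) :
    radical (x ^ n * y * z ^ n) ∣ radical x * radical y * radical z := by
  rw [← radical_pow x hn, ← radical_pow z hn]
  exact radical_mul_dvd.trans (mul_dvd_mul_right radical_mul_dvd _)

lemma theta_prod_dvd (n : ℕ) (a b c : ℤ) (hc : 2 ∣ c → 2 ∣ a - b) :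
    (theta n a b c).1 * (theta n a b c).2.1 * (theta n a b c).2.2 ∣
      (a - b) ^ n * (c ^ n - (a - b) ^ n) * c ^ n := by
  by_cases h2 : 2 ∣ c
  · obtain ⟨u, hu⟩ := pow_dvd_pow_of_dvd (hc h2) n
    obtain ⟨v, hv⟩ := pow_dvd_pow_of_dvd h2 n
    have h0 : (2 : ℤ) ^ n ≠ 0 := by positivity
    simp only [theta, if_pos h2, hu, hv, ← mul_sub, Int.mul_ediv_cancel_left _ h0]
    exact ⟨(2 ^ n) ^ 3, by ring⟩
  · simp only [theta, if_neg h2, pow_zero, Int.ediv_one]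
    exact ⟨1, by ring⟩

namespace IsABCSolution

variable {a b c : ℤ} (h : IsABCSolution a b c)
include h

lemma pos : 0 < c := by
  obtain ⟨hsum, ha, hb, -⟩ := h
  linarith

lemma abs_sub_lt : |a - b| < c := by
  obtain ⟨hsum, ha, hb, -⟩ := h
  rw [abs_sub_lt_iff]
  constructor <;> linarith

lemma sq_sub_sq_sub : c ^ 2 - (a - b) ^ 2 = 4 * (a * b) := by
  rw [show c = -(a + b) by linarith [h.1]]
  ring

lemma two_dvd_sub (hc : 2 ∣ c) : 2 ∣ a - b := by
  obtain ⟨hsum, -, -, -, -, -, -, hbc, hac⟩ := h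
  have hodd {x : ℤ} (hxc : IsCoprime x c) : ¬ 2 ∣ x := fun hx ↦ by
    have := hxc.isUnit_of_dvd' hx hc
    norm_num [Int.isUnit_iff] at this
  have := hodd hac
  have := hodd hbc
  omega

lemma radical_mul : radical (a * b * c) = radical (a * b) * radical c := by
  obtain ⟨-, -, -, -, -, -, -, hbc, hac⟩ := h
  exact UniqueFactorizationMonoid.radical_mul (hac.mul_left hbc).isRelPrime

lemma radical_theta_prod_le {n : ℕ} (hn : Even n) (hn0 : n ≠ 0) :
    radical ((theta n a b c).1 * (theta n a b c).2.1 * (theta n a b c).2.2) ≤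
      n * c ^ (n - 1) * radical (a * b * c) := by
  obtain ⟨k, rfl⟩ := even_iff_two_dvd.1 hn
  set d := a - b
  have hc : 0 < c := h.pos
  have hd : |d| < c := h.abs_sub_lt
  have hab : a ≠ b := h.2.2.2.1
  have hd0 : d ≠ 0 := sub_ne_zero.2 hab
  have hcd : c ^ (2 * k) - d ^ (2 * k) ≠ 0 := by
    rw [sub_ne_zero, ← Even.pow_abs ⟨k, two_mul k⟩ d]
    exact (pow_lt_pow_left₀ hd (abs_nonneg d) (by omega)).ne'
  have hprod : d ^ (2 * k) * (c ^ (2 * k) - d ^ (2 * k)) * c ^ (2 * k) ≠ 0 :=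
    mul_ne_zero (mul_ne_zero (pow_ne_zero _ hd0) hcd) (pow_ne_zero _ hc.ne')
  calc _ ≤ radical (d ^ (2 * k) * (c ^ (2 * k) - d ^ (2 * k)) * c ^ (2 * k)) :=
        Int.radical_le_radical (theta_prod_dvd _ a b c h.two_dvd_sub) hprod
    _ ≤ radical d * radical (c ^ (2 * k) - d ^ (2 * k)) * radical c :=
        Int.le_of_dvd (mul_pos (mul_pos (Int.radical_pos _) (Int.radical_pos _)) (Int.radical_pos _))
          (radical_pow_mul_mul_pow_dvd _ _ _ hn0)
    _ ≤ c * (radical (c ^ 2 - d ^ 2) * (k * c ^ (2 * k - 2))) * radical c := by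
        have := Int.radical_pos (c ^ (2 * k) - d ^ (2 * k))
        have := Int.radical_pos c
        gcongr
        · exact (Int.radical_le_abs hd0).trans hd.le
        · exact Int.radical_pow_sub_pow_le hd (by omega)
    _ ≤ c * (2 * radical (a * b) * (k * c ^ (2 * k - 2))) * radical c := by
        rw [h.sq_sub_sq_sub]
        have := Int.radical_pos c
        gcongr
        exact Int.radical_four_mul_le _
    _ = (2 * k : ℕ) * c ^ (2 * k - 1) * radical (a * b * c) := by
        rw [h.radical_mul, show 2 * k - 1 = 2 * k - 2 + 1 by omega, pow_succ]
        push_cast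
        ring

end IsABCSolution

lemma Real.log_le_of_le_mul_pow_mul {x t c r : ℝ} {p : ℕ} (hx : 0 < x) (h : x ≤ t * c ^ p * r) :
    Real.log x ≤ p * Real.log c + Real.log r + Real.log t := by
  obtain ⟨htc, hr⟩ := mul_ne_zero_iff.1 (hx.trans_le h).ne'
  obtain ⟨ht, hcp⟩ := mul_ne_zero_iff.1 htc
  calc Real.log x ≤ Real.log (t * c ^ p * r) := Real.log_le_log hx h
    _ = _ := by
      rw [Real.log_mul htc hr, Real.log_mul ht hcp, Real.log_pow]
      ring

/-- log rad(|ABC|) ≤ (n−1)·log c + log rad(|abc|) + log 2n;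
equivalently rad(|ABC|) ≤ 2n·c^{n−1}·rad(|abc|). -/
theorem log_rad_theta_le' (a b c : ℤ) (h : IsABCSolution a b c)
    (n : ℕ) (hn : 2 ≤ n) (hev : Even n) :
    Real.log (rad ((theta n a b c).1 * (theta n a b c).2.1 *
        (theta n a b c).2.2).natAbs : ℝ) ≤
      ((n : ℝ) - 1) * Real.log (c : ℝ) + Real.log (rad (a * b * c).natAbs : ℝ) +
        Real.log (2 * n) ∧
    ((rad ((theta n a b c).1 * (theta n a b c).2.1 *
        (theta n a b c).2.2).natAbs : ℤ)) ≤
      2 * n * c ^ (n - 1) * (rad (a * b * c).natAbs : ℤ) := by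
  have hrad : ((rad ((theta n a b c).1 * (theta n a b c).2.1 *
        (theta n a b c).2.2).natAbs : ℤ)) ≤
      2 * n * c ^ (n - 1) * (rad (a * b * c).natAbs : ℤ) := by
    rw [natCast_rad_natAbs, natCast_rad_natAbs]
    refine (h.radical_theta_prod_le hev (by omega)).trans ?_
    have := h.pos
    have := Int.radical_pos (a * b * c)
    gcongr
    linarith
  refine ⟨?_, hrad⟩
  have hlog := Real.log_le_of_le_mul_pow_mul (by exact_mod_cast rad_pos _)
    (by exact_mod_cast hrad : (rad ((theta n a b c).1 * (theta n a b c).2.1 *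
        (theta n a b c).2.2).natAbs : ℝ) ≤ 2 * n * (c : ℝ) ^ (n - 1) * (rad (a * b * c).natAbs))
  rwa [Nat.cast_sub (by omega : 1 ≤ n), Nat.cast_one] at hlog
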